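/- arXiv:2407.12316 — 2 statements merged into one kernel-verified Lean document; each statement's English description precedes it below -/
import Mathlib

section
/- If a nonnegative sequence δ(k) satisfies δ(k) ≤ C(1+k)^{-α} for all k ≥ 0 with α > 1, then for every j ≥ 0, the sum ∑_{s=0}^∞ δ(s)·δ(j+s) ≤ C'·(1+j)^{-α} for some constant C' depending only on C and α. -/
/-! Since `δ` is dominated by the decreasing summable sequence `g k = C (1 + k)^{-α}`, every
factor `δ (j + s)` is at most `g j`, so the correlation sum is at most `(∑' s, g s) * g j`. -/

open Real

lemma summable_one_add_nat_rpow_neg {α : ℝ} (hα : 1 < α) :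
    Summable fun n : ℕ => (1 + (n : ℝ)) ^ (-α) := by
  have h := (summable_nat_add_iff 1).mpr (summable_nat_rpow.mpr (neg_lt_neg hα))
  simpa only [Nat.cast_add, Nat.cast_one, add_comm] using h

lemma antitone_one_add_nat_rpow_neg {α : ℝ} (hα : 0 ≤ α) :
    Antitone fun n : ℕ => (1 + (n : ℝ)) ^ (-α) := fun m n hmn =>
  rpow_le_rpow_of_nonpos (by positivity) (by gcongr) (neg_nonpos.mpr hα)

lemma tsum_mul_shift_le_of_le_antitone {δ g : ℕ → ℝ} (hδ0 : ∀ k, 0 ≤ δ k) (hδg : ∀ k, δ k ≤ g k)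
    (hg : Antitone g) (hgs : Summable g) (j : ℕ) :
    ∑' s, δ s * δ (j + s) ≤ (∑' s, g s) * g j := by
  have hterm : ∀ s, δ s * δ (j + s) ≤ g s * g j := fun s =>
    mul_le_mul (hδg s) ((hδg _).trans (hg (Nat.le_add_right j s))) (hδ0 _)
      ((hδ0 s).trans (hδg s))
  calc ∑' s, δ s * δ (j + s)
      ≤ ∑' s, g s * g j :=
        Summable.tsum_le_tsum hterm
          (.of_nonneg_of_le (fun s => mul_nonneg (hδ0 _) (hδ0 _)) hterm (hgs.mul_right _))
          (hgs.mul_right _)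
    _ = (∑' s, g s) * g j := tsum_mul_right

theorem stmt_0 (δ : ℕ → ℝ) (C α : ℝ) (hC : 0 < C) (hα : 1 < α)
    (hδ0 : ∀ k, 0 ≤ δ k) (hδ : ∀ k : ℕ, δ k ≤ C * (1 + (k : ℝ)) ^ (-α)) :
    ∃ C' : ℝ, 0 < C' ∧ ∀ j : ℕ,
      ∑' s : ℕ, δ s * δ (j + s) ≤ C' * (1 + (j : ℝ)) ^ (-α) := by
  set g : ℕ → ℝ := fun k => C * (1 + (k : ℝ)) ^ (-α)
  have hgs : Summable g := (summable_one_add_nat_rpow_neg hα).mul_left C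
  have hg : Antitone g := fun m n hmn =>
    mul_le_mul_of_nonneg_left (antitone_one_add_nat_rpow_neg (by linarith) hmn) hC.le
  have hS : 0 < ∑' s, g s := hgs.tsum_pos (fun s => by positivity) 0 (by positivity)
  refine ⟨(∑' s, g s) * C, by positivity, fun j => ?_⟩
  calc ∑' s, δ s * δ (j + s) ≤ (∑' s, g s) * g j :=
        tsum_mul_shift_le_of_le_antitone hδ0 hδ hg hgs j
    _ = (∑' s, g s) * C * (1 + (j : ℝ)) ^ (-α) := by ring
end

section
/- Let X₀,…,X_n be square-integrable random variables adapted to a filtration (𝒜_u) such that E(X_{u+1} − X_u | 𝒜_u) = 0 for all u (i.e., (X_u) is a martingale) with X₀ = 0. Then for p ≥ 2 there is a constant C_p with ‖X_n‖_p ≤ C_p ( ∑_{u=0}^{n−1} ‖X_{u+1} − X_u‖_p² )^{1/2}. -/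
/-!
The second-order Taylor bound
`|s + t| ^ p ≤ |s| ^ p + p |s| ^ (p - 2) s t + p (p - 1) (|s| + |t|) ^ (p - 2) t ^ 2`
is integrated along one martingale step `X (n + 1) = X n + d`. The linear term has mean zero since
`|X n| ^ (p - 2) X n` is `𝒜 n`-measurable and `E[d | 𝒜 n] = 0`, and Hölder's inequality with
exponents `p / (p - 2)` and `p / 2` bounds the quadratic term by `(‖X n‖ + ‖d‖) ^ (p - 2) ‖d‖ ^ 2`.
Taking `2 / p`-th powers and using Bernoulli's inequality turns this into
`‖X (n + 1)‖ ^ 2 ≤ ‖X n‖ ^ 2 + C ‖d‖ ^ 2`, which telescopes from `X 0 = 0`.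
-/

open MeasureTheory Set

theorem hasDerivAt_abs_rpow_mul_self {q : ℝ} (hq : 0 ≤ q) (x : ℝ) :
    HasDerivAt (fun y : ℝ => |y| ^ q * y) ((q + 1) * |x| ^ q) x := by
  rcases hq.eq_or_lt with rfl | hq
  · simpa using hasDerivAt_id' x
  rcases eq_or_ne x 0 with rfl | hx
  · rw [abs_zero, Real.zero_rpow hq.ne', mul_zero, hasDerivAt_iff_tendsto_slope]
    have hcont : Continuous fun y : ℝ => |y| ^ q :=
      continuous_abs.rpow_const fun _ => Or.inr hq.le
    refine ((hcont.tendsto 0).mono_left nhdsWithin_le_nhds).congr' ?_ |>.trans_eq (by simp [hq.ne'])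
    filter_upwards [self_mem_nhdsWithin] with y (hy : y ≠ 0)
    simp [slope_def_field, hy]
  · have habs : HasDerivAt (fun y : ℝ => |y| ^ q) (SignType.sign x * q * |x| ^ (q - 1)) x :=
      (hasDerivAt_abs hx).rpow_const (Or.inl (abs_ne_zero.mpr hx))
    refine (habs.mul (hasDerivAt_id' x)).congr_deriv ?_
    have hsign : (SignType.sign x : ℝ) * x = |x| := by
      rcases hx.lt_or_gt with h | h <;> simp [h, abs_of_neg, abs_of_pos]
    have hpow : |x| ^ (q - 1) * |x| = |x| ^ q := by
      rw [← Real.rpow_add_one (abs_ne_zero.mpr hx), sub_add_cancel]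
    linear_combination q * hpow + q * |x| ^ (q - 1) * hsign

theorem abs_abs_rpow_mul_self_sub_le {q M a b : ℝ} (hq : 0 ≤ q) (ha : |a| ≤ M) (hb : |b| ≤ M) :
    |(|a| ^ q * a) - |b| ^ q * b| ≤ (q + 1) * M ^ q * |a - b| := by
  have hderiv : ∀ x ∈ Icc (-M) M, ‖(q + 1) * |x| ^ q‖ ≤ (q + 1) * M ^ q := fun x hx => by
    rw [Real.norm_of_nonneg (by positivity)]
    gcongr
    exact abs_le.mpr hx
  simpa [Real.norm_eq_abs] using (convex_Icc (-M) M).norm_image_sub_le_of_norm_hasDerivWithin_le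
    (fun x _ => (hasDerivAt_abs_rpow_mul_self hq x).hasDerivWithinAt) hderiv
    (abs_le.mp hb) (abs_le.mp ha)

theorem abs_add_rpow_le {p : ℝ} (hp : 2 ≤ p) (s t : ℝ) :
    |s + t| ^ p ≤ |s| ^ p + p * (|s| ^ (p - 2) * s) * t
      + p * (p - 1) * (|s| + |t|) ^ (p - 2) * t ^ 2 := by
  set c := p * (|s| ^ (p - 2) * s)
  set M := |s| + |t|
  -- mean value theorem for `y ↦ |y| ^ p - c * y`, whose derivative vanishes at `y = s`
  have hderiv : ∀ x ∈ uIcc s (s + t),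
      ‖p * |x| ^ (p - 2) * x - c‖ ≤ p * (p - 1) * M ^ (p - 2) * |t| := fun x hx => by
    have hxs : |x - s| ≤ |t| := by simpa using abs_sub_left_of_mem_uIcc hx
    have hxM : |x| ≤ M := by
      calc |x| = |s + (x - s)| := by ring_nf
        _ ≤ M := (abs_add_le _ _).trans (add_le_add_right hxs _)
    have hψ := abs_abs_rpow_mul_self_sub_le (sub_nonneg.mpr hp) hxM
      (le_add_of_nonneg_right (abs_nonneg t))
    have hK : 0 ≤ p * ((p - 1) * M ^ (p - 2)) :=
      mul_nonneg (by linarith) (mul_nonneg (by linarith) (by positivity))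
    calc ‖p * |x| ^ (p - 2) * x - c‖ = p * |(|x| ^ (p - 2) * x) - |s| ^ (p - 2) * s| := by
          rw [Real.norm_eq_abs, mul_assoc, ← mul_sub, abs_mul, abs_of_nonneg (by linarith : 0 ≤ p)]
      _ ≤ p * ((p - 2 + 1) * M ^ (p - 2) * |x - s|) := by gcongr
      _ = p * ((p - 1) * M ^ (p - 2)) * |x - s| := by ring
      _ ≤ p * ((p - 1) * M ^ (p - 2)) * |t| := by gcongr
      _ = p * (p - 1) * M ^ (p - 2) * |t| := by ring
  have hmvt := (convex_uIcc s (s + t)).norm_image_sub_le_of_norm_hasDerivWithin_le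
    (f := fun y => |y| ^ p - c * y)
    (fun x _ => ((hasDerivAt_abs_rpow x (by linarith)).sub
      ((hasDerivAt_id x).const_mul c)).hasDerivWithinAt)
    (by simpa using hderiv) left_mem_uIcc right_mem_uIcc
  rw [Real.norm_eq_abs, Real.norm_eq_abs, add_sub_cancel_left, mul_assoc _ |t|, abs_mul_abs_self,
    ← sq] at hmvt
  linarith [(le_abs_self _).trans hmvt]

theorem rpow_sub_two_mul_sq {p x : ℝ} (hp : p ≠ 0) (hx : 0 ≤ x) : x ^ (p - 2) * x ^ 2 = x ^ p := by
  rw [← Real.rpow_two, ← Real.rpow_add' hx (by simpa), sub_add_cancel]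

theorem sq_le_sq_add_of_rpow_le {p a b c K : ℝ} (hp : 2 ≤ p) (ha : 0 < a) (hc : 0 ≤ c)
    (hK : 0 ≤ K) (h : c ^ p ≤ a ^ p + K * a ^ (p - 2) * b ^ 2) :
    c ^ 2 ≤ a ^ 2 + 2 / p * K * b ^ 2 := by
  have hp0 : 0 < p := by linarith
  set x := K * b ^ 2 / a ^ 2
  have hx : 0 ≤ x := by positivity
  have hfactor : a ^ p + K * a ^ (p - 2) * b ^ 2 = a ^ p * (1 + x) := by
    rw [← rpow_sub_two_mul_sq hp0.ne' ha.le]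
    simp only [x]
    field_simp
  have hbern : (1 + x) ^ (2 / p) ≤ 1 + 2 / p * x :=
    rpow_one_add_le_one_add_mul_self (by linarith) (by positivity) ((div_le_one hp0).mpr hp)
  have hsq : ∀ y : ℝ, 0 ≤ y → (y ^ p) ^ (2 / p) = y ^ 2 := fun y hy => by
    rw [← Real.rpow_mul hy, mul_div_cancel₀ _ hp0.ne', Real.rpow_two]
  calc c ^ 2 = (c ^ p) ^ (2 / p) := (hsq c hc).symm
    _ ≤ (a ^ p * (1 + x)) ^ (2 / p) := by
        rw [← hfactor]; gcongr
    _ = a ^ 2 * (1 + x) ^ (2 / p) := by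
        rw [Real.mul_rpow (by positivity) (by positivity), hsq a ha.le]
    _ ≤ a ^ 2 * (1 + 2 / p * x) := by gcongr
    _ = a ^ 2 + 2 / p * K * b ^ 2 := by
        simp only [x]; field_simp

theorem sq_le_sq_add_of_le_add_of_rpow_le {p a b c : ℝ} (hp : 2 ≤ p) (ha : 0 ≤ a) (hb : 0 ≤ b)
    (hc : 0 ≤ c) (htri : c ≤ a + b)
    (h : c ^ p ≤ a ^ p + p * (p - 1) * (a + b) ^ (p - 2) * b ^ 2) :
    c ^ 2 ≤ a ^ 2 + (4 + (p - 1) * 2 ^ (p - 1)) * b ^ 2 := by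
  have hp0 : 0 < p := by linarith
  have hK : 0 ≤ (p - 1) * 2 ^ (p - 1) := mul_nonneg (by linarith) (by positivity)
  rcases le_or_gt a b with hab | hba
  · nlinarith
  · have hapos : 0 < a := hb.trans_lt hba
    have hmono : (a + b) ^ (p - 2) ≤ 2 ^ (p - 2) * a ^ (p - 2) := by
      rw [← Real.mul_rpow (by norm_num) ha]
      gcongr
      linarith
    have h' : c ^ p ≤ a ^ p + p * (p - 1) * 2 ^ (p - 2) * a ^ (p - 2) * b ^ 2 := by
      have : 0 ≤ p * (p - 1) * b ^ 2 := mul_nonneg (by nlinarith) (sq_nonneg b)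
      nlinarith
    have hconst : 2 / p * (p * (p - 1) * 2 ^ (p - 2)) = (p - 1) * 2 ^ (p - 1) := by
      rw [show p - 1 = p - 2 + 1 by ring, Real.rpow_add_one two_ne_zero]
      field_simp
    have := sq_le_sq_add_of_rpow_le hp hapos hc
      (mul_nonneg (by nlinarith) (by positivity)) h'
    rw [hconst] at this
    nlinarith

section

variable {Ω : Type*} {m0 : MeasurableSpace Ω} {μ : Measure Ω} {p : ℝ}

theorem lpNorm_rpow_eq_integral (hp : 0 < p) {f : Ω → ℝ} (hf : AEStronglyMeasurable f μ) :
    lpNorm f (ENNReal.ofReal p) μ ^ p = ∫ ω, |f ω| ^ p ∂μ := by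
  rw [lpNorm_eq_integral_norm_rpow_toReal (by simpa using hp) ENNReal.ofReal_ne_top hf,
    ENNReal.toReal_ofReal hp.le, Real.rpow_inv_rpow (integral_nonneg fun _ => by positivity) hp.ne']
  rfl

theorem integral_rpow_sub_two_mul_sq_le (hp : 2 ≤ p) {f g : Ω → ℝ} (hf0 : 0 ≤ f)
    (hf : MemLp f (ENNReal.ofReal p) μ) (hg : MemLp g (ENNReal.ofReal p) μ) :
    ∫ ω, f ω ^ (p - 2) * g ω ^ 2 ∂μ
      ≤ lpNorm f (ENNReal.ofReal p) μ ^ (p - 2) * lpNorm g (ENNReal.ofReal p) μ ^ 2 := by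
  have hp0 : 0 < p := by linarith
  rcases hp.eq_or_lt with rfl | hp2
  · simp only [sub_self, Real.rpow_zero, one_mul]
    rw [← Real.rpow_two, lpNorm_rpow_eq_integral hp0 hg.1]
    simp
  have hconj : (p / (p - 2)).HolderConjugate (p / 2) := by
    rw [Real.holderConjugate_iff]
    constructor
    · rw [lt_div_iff₀ (by linarith)]; linarith
    · field_simp; ring
  have hfq : MemLp (fun ω => f ω ^ (p - 2)) (ENNReal.ofReal (p / (p - 2))) μ := by
    have := hf.norm_rpow_div (ENNReal.ofReal (p - 2))
    rw [ENNReal.toReal_ofReal (by linarith), ← ENNReal.ofReal_div_of_pos (by linarith)] at this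
    exact this.ae_eq (ae_of_all _ fun ω => by simp [abs_of_nonneg (hf0 ω)])
  have hgq : MemLp (fun ω => g ω ^ 2) (ENNReal.ofReal (p / 2)) μ := by
    have := hg.norm_rpow_div (ENNReal.ofReal 2)
    rw [ENNReal.toReal_ofReal zero_le_two, ← ENNReal.ofReal_div_of_pos two_pos] at this
    exact this.ae_eq (ae_of_all _ fun ω => by simp)
  have hholder := integral_mul_le_Lp_mul_Lq_of_nonneg hconj
    (ae_of_all _ fun ω => Real.rpow_nonneg (hf0 ω) _) (ae_of_all _ fun ω => sq_nonneg _) hfq hgq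
  have hf_int : ∫ ω, (f ω ^ (p - 2)) ^ (p / (p - 2)) ∂μ = lpNorm f (ENNReal.ofReal p) μ ^ p := by
    rw [lpNorm_rpow_eq_integral hp0 hf.1]
    refine integral_congr_ae (ae_of_all _ fun ω => ?_)
    dsimp only
    rw [← Real.rpow_mul (hf0 ω), abs_of_nonneg (hf0 ω), mul_div_cancel₀ _ (by linarith)]
  have hg_int : ∫ ω, (g ω ^ 2) ^ (p / 2) ∂μ = lpNorm g (ENNReal.ofReal p) μ ^ p := by
    rw [lpNorm_rpow_eq_integral hp0 hg.1]
    refine integral_congr_ae (ae_of_all _ fun ω => ?_)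
    dsimp only
    rw [← sq_abs, ← Real.rpow_two, ← Real.rpow_mul (abs_nonneg _), mul_div_cancel₀ _ two_ne_zero]
  rw [hf_int, hg_int, ← Real.rpow_mul lpNorm_nonneg, ← Real.rpow_mul lpNorm_nonneg] at hholder
  convert hholder using 3
  · field_simp
  · rw [← Real.rpow_two]; congr 1; field_simp

theorem integral_mul_eq_zero_of_condExp_eq_zero {m : MeasurableSpace Ω} (hm : m ≤ m0)
    [SigmaFinite (μ.trim hm)] {g d : Ω → ℝ} (hg : AEStronglyMeasurable[m] g μ)
    (hgd : Integrable (g * d) μ) (hd : Integrable d μ) (hcond : μ[d | m] =ᵐ[μ] 0) :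
    ∫ ω, g ω * d ω ∂μ = 0 := by
  have hpull : μ[g * d | m] =ᵐ[μ] 0 := by
    filter_upwards [condExp_mul_of_aestronglyMeasurable_left hg hgd hd, hcond] with ω h1 h2
    simp [h1, h2]
  change ∫ ω, (g * d) ω ∂μ = 0
  rw [← integral_condExp hm, integral_congr_ae hpull]
  simp

theorem rpow_sub_two_mul_abs_mul_abs_le (hp : 2 ≤ p) {a b M : ℝ} (ha : |a| ≤ M) (hb : |b| ≤ M) :
    M ^ (p - 2) * |a| * |b| ≤ M ^ p := by
  have hM : 0 ≤ M := (abs_nonneg a).trans ha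
  rw [← rpow_sub_two_mul_sq (by linarith : (0:ℝ) < p).ne' hM, mul_assoc, sq]
  exact mul_le_mul_of_nonneg_left (mul_le_mul ha hb (abs_nonneg _) hM) (by positivity)

theorem integral_abs_add_rpow_le [IsFiniteMeasure μ] (hp : 2 ≤ p) {m : MeasurableSpace Ω}
    (hm : m ≤ m0) {S d : Ω → ℝ} (hS : MemLp S (ENNReal.ofReal p) μ)
    (hd : MemLp d (ENNReal.ofReal p) μ) (hSm : StronglyMeasurable[m] S) (hcond : μ[d | m] =ᵐ[μ] 0) :
    ∫ ω, |S ω + d ω| ^ p ∂μ ≤ ∫ ω, |S ω| ^ p ∂μ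
      + p * (p - 1) * ∫ ω, (|S ω| + |d ω|) ^ (p - 2) * d ω ^ 2 ∂μ := by
  have hp0 : 0 < p := by linarith
  have hq : 0 ≤ p - 2 := by linarith
  have hψ : Continuous fun y : ℝ => |y| ^ (p - 2) * y :=
    continuous_iff_continuousAt.mpr fun y => (hasDerivAt_abs_rpow_mul_self hq y).continuousAt
  have hint : ∀ {f : Ω → ℝ}, MemLp f (ENNReal.ofReal p) μ → Integrable (fun ω => |f ω| ^ p) μ :=
    fun hf => by
      simpa [ENNReal.toReal_ofReal hp0.le] using
        hf.integrable_norm_rpow (by simpa using hp0) ENNReal.ofReal_ne_top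
  have hSmeas := hS.1
  have hdmeas := hd.1
  have hdom : Integrable (fun ω => (|S ω| + |d ω|) ^ p) μ :=
    (hint (hS.norm.add hd.norm)).congr (ae_of_all _ fun ω => by simp [abs_of_nonneg, add_nonneg])
  have hSM : ∀ ω, |S ω| ≤ |S ω| + |d ω| := fun ω => le_add_of_nonneg_right (abs_nonneg _)
  have hdM : ∀ ω, |d ω| ≤ |S ω| + |d ω| := fun ω => le_add_of_nonneg_left (abs_nonneg _)
  have hcross : Integrable (fun ω => |S ω| ^ (p - 2) * S ω * d ω) μ := by
    refine hdom.mono' (by fun_prop) (ae_of_all _ fun ω => ?_)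
    rw [Real.norm_eq_abs, abs_mul, abs_mul, abs_of_nonneg (by positivity)]
    calc |S ω| ^ (p - 2) * |S ω| * |d ω| ≤ (|S ω| + |d ω|) ^ (p - 2) * |S ω| * |d ω| := by
          gcongr; exact hSM ω
      _ ≤ _ := rpow_sub_two_mul_abs_mul_abs_le hp (hSM ω) (hdM ω)
  have hsq : Integrable (fun ω => (|S ω| + |d ω|) ^ (p - 2) * d ω ^ 2) μ := by
    refine hdom.mono' (by fun_prop) (ae_of_all _ fun ω => ?_)
    rw [Real.norm_eq_abs, abs_of_nonneg (by positivity), ← sq_abs, sq, ← mul_assoc]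
    exact rpow_sub_two_mul_abs_mul_abs_le hp (hdM ω) (hdM ω)
  have hzero : ∫ ω, |S ω| ^ (p - 2) * S ω * d ω ∂μ = 0 :=
    integral_mul_eq_zero_of_condExp_eq_zero hm (hψ.comp_stronglyMeasurable hSm).aestronglyMeasurable
      hcross (hd.integrable (by simpa using hp.trans' one_le_two)) hcond
  calc ∫ ω, |S ω + d ω| ^ p ∂μ
      ≤ ∫ ω, |S ω| ^ p + p * (|S ω| ^ (p - 2) * S ω * d ω)
          + p * (p - 1) * ((|S ω| + |d ω|) ^ (p - 2) * d ω ^ 2) ∂μ := by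
        refine integral_mono (hint (hS.add hd)) (((hint hS).add (hcross.const_mul p)).add
          (hsq.const_mul _)) fun ω => ?_
        have := abs_add_rpow_le hp (S ω) (d ω)
        dsimp only
        linarith
    _ = _ := by
        rw [integral_add, integral_add, integral_const_mul, integral_const_mul, hzero, mul_zero,
          add_zero]
        exacts [hint hS, hcross.const_mul p, (hint hS).add (hcross.const_mul p), hsq.const_mul _]

theorem lpNorm_add_sq_le [IsFiniteMeasure μ] (hp : 2 ≤ p) {m : MeasurableSpace Ω} (hm : m ≤ m0)
    {S d : Ω → ℝ} (hS : MemLp S (ENNReal.ofReal p) μ) (hd : MemLp d (ENNReal.ofReal p) μ)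
    (hSm : StronglyMeasurable[m] S) (hcond : μ[d | m] =ᵐ[μ] 0) :
    lpNorm (S + d) (ENNReal.ofReal p) μ ^ 2
      ≤ lpNorm S (ENNReal.ofReal p) μ ^ 2
        + (4 + (p - 1) * 2 ^ (p - 1)) * lpNorm d (ENNReal.ofReal p) μ ^ 2 := by
  have hp0 : 0 < p := by linarith
  have hp1 : 1 ≤ ENNReal.ofReal p := by simpa using hp.trans' one_le_two
  have hM : MemLp (fun ω => |S ω| + |d ω|) (ENNReal.ofReal p) μ := hS.abs.add hd.abs
  have hMnorm : lpNorm (fun ω => |S ω| + |d ω|) (ENNReal.ofReal p) μ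
      ≤ lpNorm S (ENNReal.ofReal p) μ + lpNorm d (ENNReal.ofReal p) μ := by
    rw [← lpNorm_fun_abs hS.1, ← lpNorm_fun_abs hd.1]
    exact lpNorm_add_le hS.abs hp1
  refine sq_le_sq_add_of_le_add_of_rpow_le hp lpNorm_nonneg lpNorm_nonneg lpNorm_nonneg
    (lpNorm_add_le hS hp1) ?_
  rw [lpNorm_rpow_eq_integral hp0 (hS.add hd).1, lpNorm_rpow_eq_integral hp0 hS.1]
  calc ∫ ω, |(S + d) ω| ^ p ∂μ
      ≤ ∫ ω, |S ω| ^ p ∂μ + p * (p - 1) * ∫ ω, (|S ω| + |d ω|) ^ (p - 2) * d ω ^ 2 ∂μ :=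
        integral_abs_add_rpow_le hp hm hS hd hSm hcond
    _ ≤ ∫ ω, |S ω| ^ p ∂μ + p * (p - 1) * (lpNorm (fun ω => |S ω| + |d ω|) (ENNReal.ofReal p) μ
          ^ (p - 2) * lpNorm d (ENNReal.ofReal p) μ ^ 2) := by
        have : 0 ≤ p * (p - 1) := by nlinarith
        gcongr
        exact integral_rpow_sub_two_mul_sq_le hp (fun ω => by positivity) hM hd
    _ ≤ _ := by
        have : 0 ≤ p * (p - 1) := by nlinarith
        rw [mul_assoc (p * (p - 1))]
        gcongr
        exact lpNorm_nonneg

theorem MeasureTheory.Martingale.condExp_succ_sub_ae_eq_zero [IsFiniteMeasure μ]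
    {𝒜 : Filtration ℕ m0} {X : ℕ → Ω → ℝ} (hX : Martingale X 𝒜 μ) (n : ℕ) : μ[X (n + 1) - X n | 𝒜 n] =ᵐ[μ] 0 := by
  filter_upwards [condExp_sub (m := 𝒜 n) (hX.integrable (n + 1)) (hX.integrable n),
    hX.condExp_ae_eq n.le_succ] with ω h1 h2
  rw [h1, Pi.sub_apply, h2, condExp_of_stronglyMeasurable (𝒜.le n) (hX.stronglyAdapted n)
    (hX.integrable n), sub_self, Pi.zero_apply]

end

open Finset in
theorem stmt_9 (p : ℝ) (hp : 2 ≤ p) :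
    ∃ C : ℝ, 0 < C ∧
      ∀ (Ω : Type) (m0 : MeasurableSpace Ω) (μ : Measure Ω)
        (_ : IsProbabilityMeasure μ) (𝒜 : Filtration ℕ m0)
        (X : ℕ → Ω → ℝ),
        Martingale X 𝒜 μ →
        (∀ n, MemLp (X n) (ENNReal.ofReal p) μ) →
        X 0 = 0 →
        ∀ n : ℕ,
          (eLpNorm (X n) (ENNReal.ofReal p) μ).toReal
            ≤ C * Real.sqrt (∑ u ∈ Finset.range n,
                ((eLpNorm (X (u + 1) - X u) (ENNReal.ofReal p) μ).toReal) ^ 2) := by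
  have hC : 0 < 4 + (p - 1) * 2 ^ (p - 1) := by
    have : 0 ≤ (p - 1) * (2 : ℝ) ^ (p - 1) := mul_nonneg (by linarith) (by positivity)
    linarith
  refine ⟨√(4 + (p - 1) * 2 ^ (p - 1)), Real.sqrt_pos.mpr hC, ?_⟩
  intro Ω m0 μ hμ 𝒜 X hX hL hX0 n
  have hsq : ∀ n, lpNorm (X n) (ENNReal.ofReal p) μ ^ 2 ≤ (4 + (p - 1) * 2 ^ (p - 1)) *
      ∑ u ∈ range n, lpNorm (X (u + 1) - X u) (ENNReal.ofReal p) μ ^ 2 := by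
    intro n
    induction n with
    | zero => simp [hX0]
    | succ n ih =>
      have hstep := lpNorm_add_sq_le hp (𝒜.le n) (hL n) ((hL (n + 1)).sub (hL n))
        (hX.stronglyAdapted n) (hX.condExp_succ_sub_ae_eq_zero n)
      rw [add_sub_cancel] at hstep
      rw [sum_range_succ, mul_add]
      linarith
  simp_rw [toReal_eLpNorm (hL _).1, toReal_eLpNorm ((hL _).sub (hL _)).1]
  rw [← Real.sqrt_sq lpNorm_nonneg, ← Real.sqrt_mul hC.le]
  exact Real.sqrt_le_sqrt (hsq n)
end
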